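/- arXiv:1901.07852 — 2 statements merged into one kernel-verified Lean document; each statement's English description precedes it below -/
import Mathlib

section
/- Let τ be an automorphism (invertible linear endomorphism) of ℂ^m and V a linear subspace. Then every v₁ ∈ V is uniquely recoverable in V under {id, τ} (i.e., for all v₁, v₂ ∈ V and τ₁, τ₂ ∈ {id, τ}, τ₁(v₁) = τ₂(v₂) implies v₁ = v₂) if and only if V ∩ τ(V) is contained in the eigenspace of τ for eigenvalue 1. -/
/-- Unique recovery in `V` under `{id, τ}` (for `τ` an automorphism of `ℂ^m`)
holds iff `V ⊓ τ(V)` is contained in the eigenspace of `τ` for eigenvalue `1`. -/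
theorem stmt_0 (m : ℕ) (τ : Module.End ℂ (Fin m → ℂ)) (hτ : Function.Bijective τ)
    (V : Submodule ℂ (Fin m → ℂ)) :
    (∀ τ₁ ∈ ({LinearMap.id, τ} : Set (Module.End ℂ (Fin m → ℂ))),
      ∀ τ₂ ∈ ({LinearMap.id, τ} : Set (Module.End ℂ (Fin m → ℂ))),
      ∀ v₁ ∈ V, ∀ v₂ ∈ V, τ₁ v₁ = τ₂ v₂ → v₁ = v₂) ↔
    V ⊓ V.map τ ≤ Module.End.eigenspace τ 1 := by
  constructor
  · intro h x hx
    obtain ⟨hxV, v, hvV, hvx⟩ := hx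
    have := h τ (by simp) LinearMap.id (by simp) v hvV x hxV (by simpa using hvx)
    rw [Module.End.mem_eigenspace_iff, one_smul]
    rw [this] at hvx
    exact hvx
  · intro h τ₁ hτ₁ τ₂ hτ₂ v₁ hv₁ v₂ hv₂ heq
    have key : ∀ v ∈ V, ∀ w ∈ V, τ w = v → w = v := by
      intro v hv w hw hwv
      have hve : τ v = v := by
        have := h ⟨hv, w, hw, hwv⟩
        rw [Module.End.mem_eigenspace_iff, one_smul] at this
        exact this
      exact hτ.injective (by rw [hwv, hve])
    rcases hτ₁ with rfl | rfl <;> rcases hτ₂ with rfl | rfl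
    · simpa using heq
    · exact (key v₁ hv₁ v₂ hv₂ (by simpa using heq.symm)).symm
    · exact key v₂ hv₂ v₁ hv₁ (by simpa using heq)
    · exact hτ.injective heq
end

section
/- Let τ be an endomorphism of ℂ^m with distinct eigenvalues admitting 2n linearly independent eigenvectors w₁,…,w_{2n} such that for each i ∈ {1,…,n}, w_i and w_{i+n} correspond to distinct eigenvalues. Define v_i = w_i + w_{i+n} for i ∈ {1,…,n} and V = span(v₁,…,v_n). Then V ∩ τ(V) = 0. -/
/-- Paired-eigenvector construction: if `w₁,…,w_{2n}` are linearly independent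
eigenvectors of `τ` with `λ_i ≠ λ_{i+n}`, and `v_i = w_i + w_{i+n}`, then
`V = span(v₁,…,v_n)` satisfies `V ∩ τ(V) = 0`. -/
theorem stmt_14 (m n : ℕ) (τ : Module.End ℂ (Fin m → ℂ))
    (w : Fin (n + n) → (Fin m → ℂ)) (lam : Fin (n + n) → ℂ)
    (hindep : LinearIndependent ℂ w)
    (heig : ∀ i, τ (w i) = lam i • w i)
    (hdistinct : ∀ i : Fin n, lam (Fin.castAdd n i) ≠ lam (Fin.natAdd n i)) :
    let v : Fin n → (Fin m → ℂ) := fun i => w (Fin.castAdd n i) + w (Fin.natAdd n i)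
    let V : Submodule ℂ (Fin m → ℂ) := Submodule.span ℂ (Set.range v)
    V ⊓ V.map τ = ⊥ := by
  intro v V
  rw [eq_bot_iff]
  intro x hx'
  rw [Submodule.mem_inf] at hx'
  obtain ⟨hx, hτ⟩ := hx'
  rw [Submodule.mem_map] at hτ
  obtain ⟨y, hy, rfl⟩ := hτ
  rw [show V = Submodule.span ℂ (Set.range v) from rfl,
    Submodule.mem_span_range_iff_exists_fun] at hx hy
  obtain ⟨c, hc⟩ := hx
  obtain ⟨d, hd⟩ := hy
  have hτv : ∀ i, τ (v i) = lam (Fin.castAdd n i) • w (Fin.castAdd n i)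
      + lam (Fin.natAdd n i) • w (Fin.natAdd n i) := by
    intro i; simp [v, map_add, heig]
  have hx' : (∑ i, c i • w (Fin.castAdd n i)) + ∑ i, c i • w (Fin.natAdd n i) = τ y := by
    rw [← hc]; simp [v, smul_add, Finset.sum_add_distrib]
  have hy' : τ y = (∑ i, (d i * lam (Fin.castAdd n i)) • w (Fin.castAdd n i))
      + ∑ i, (d i * lam (Fin.natAdd n i)) • w (Fin.natAdd n i) := by
    rw [← hd, map_sum]
    simp only [map_smul, hτv, smul_add, Finset.sum_add_distrib, smul_smul]
  have key : ∀ j, (Fin.addCases (fun i => c i - d i * lam (Fin.castAdd n i))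
      (fun i => c i - d i * lam (Fin.natAdd n i)) : Fin (n+n) → ℂ) j = 0 := by
    apply Fintype.linearIndependent_iff.mp hindep
    rw [Fin.sum_univ_add]
    simp only [Fin.addCases_left, Fin.addCases_right, sub_smul, Finset.sum_sub_distrib]
    rw [show ∀ a b a' b' : Fin m → ℂ, (a - a') + (b - b') = (a + b) - (a' + b') from
      fun a b a' b' => by abel]
    rw [hx', ← hy', sub_self]
  have hc0 : ∀ i, c i = 0 := by
    intro i
    have h1 := key (Fin.castAdd n i)
    have h2 := key (Fin.natAdd n i)
    simp only [Fin.addCases_left] at h1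
    simp only [Fin.addCases_right] at h2
    have hd0 : d i = 0 := by
      have := hdistinct i
      have : d i * (lam (Fin.castAdd n i) - lam (Fin.natAdd n i)) = 0 := by
        rw [mul_sub]; linear_combination h2 - h1
      rcases mul_eq_zero.mp this with h | h
      · exact h
      · exact absurd (sub_eq_zero.mp h) (hdistinct i)
    rw [hd0, zero_mul, sub_zero] at h1
    exact h1
  rw [Submodule.mem_bot, ← hc]
  simp [hc0]
end
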